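/- Fix λ ∈ (0, λ₀). There exists a constant K₁(λ) ≥ 1, depending only on d, M₀, M₁, λ, with the following property. Let ω ∈ Ω and N ∈ ℕ be such that Σ_{m=−k+1}^{0} ξ_m(ω) > k(M₁ + λ + log(2d+1)) for all k ≥ N. Then for every c ≥ 1, every φ ∈ F(c), every y ∈ ℤ^d with |y| ≥ N, and every integer n ≥ N: (T^{−n,0}(ω)φ)(y) ≤ K₁(λ) · (e^{−λ|y|} + c·e^{−λn}) · (T^{−n,0}(ω)φ)(0). -/

import Mathlib

open MeasureTheory Filter

namespace BKpaper

abbrev X (d : ℕ) := Fin d → ℤ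

/-- the max-norm |x| = max_i |x_i|, as a natural number -/
def nm {d : ℕ} (x : X d) : ℕ := Finset.univ.sup fun i => (x i).natAbs

/-- spin value of a boolean: `true ↦ 1`, `false ↦ -1` -/
def sgn (b : Bool) : ℝ := if b then 1 else -1

/-- ξ_m(ω) = M₀ if ω_m = 1, ξ_m(ω) = −M₁ if ω_m = −1 -/
def xi (M₀ M₁ : ℝ) (ω : ℤ → Bool) (m : ℤ) : ℝ := if ω m then M₀ else -M₁

/-- one admissible step of the lazy random walk -/
def stepOK {d : ℕ} (x y : X d) : Prop := (∑ i, (y i - x i).natAbs) ≤ 1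

/-- admissible path on the (discrete) interval [n₁, n₂] -/
def Adm {d : ℕ} (n₁ n₂ : ℤ) (γ : ℤ → X d) : Prop :=
  ∀ n : ℤ, n₁ ≤ n → n < n₂ → stepOK (γ n) (γ (n + 1))

/-- a path frozen outside [n₁,n₂]; used to represent a path on [n₁,n₂] by a
function on all of ℤ -/
def Frozen {d : ℕ} (n₁ n₂ : ℤ) (γ : ℤ → X d) : Prop :=
  (∀ n : ℤ, n ≤ n₁ → γ n = γ n₁) ∧ (∀ n : ℤ, n₂ ≤ n → γ n = γ n₂)

/-- Φ_{n₁,n₂}(γ,ω) = Σ_{n=n₁+1}^{n₂} V(γ(n)) ω_n -/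
noncomputable def Phi {d : ℕ} (V : X d → ℝ) (ω : ℤ → Bool) (n₁ n₂ : ℤ) (γ : ℤ → X d) : ℝ :=
  ∑ n ∈ Finset.Icc (n₁ + 1) n₂, V (γ n) * sgn (ω n)

/-- the Feynman–Kac operator T^{n₁,n₂}(ω) -/
noncomputable def T {d : ℕ} (V : X d → ℝ) (ω : ℤ → Bool) (n₁ n₂ : ℤ)
    (u : X d → ℝ) (x : X d) : ℝ :=
  ((2 * (d : ℝ) + 1) ^ (n₂ - n₁))⁻¹ *
    ∑' γ : {γ : ℤ → X d // Adm n₁ n₂ γ ∧ Frozen n₁ n₂ γ ∧ γ n₂ = x},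
      Real.exp (Phi V ω n₁ n₂ γ.1) * u (γ.1 n₁)

/-- the partition function Z_{n₁,n₂}(x₁,x₂) -/
noncomputable def Z {d : ℕ} (V : X d → ℝ) (ω : ℤ → Bool) (n₁ n₂ : ℤ) (x₁ x₂ : X d) : ℝ :=
  ∑' γ : {γ : ℤ → X d // Adm n₁ n₂ γ ∧ Frozen n₁ n₂ γ ∧ γ n₁ = x₁ ∧ γ n₂ = x₂},
    Real.exp (Phi V ω n₁ n₂ γ.1)

/-- the class F(c): nonnegative bounded functions with sup φ ≤ c·φ(0) -/
def Fset (d : ℕ) (c : ℝ) : Set (X d → ℝ) :=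
  {φ | (∀ x, 0 ≤ φ x) ∧ ∀ x, φ x ≤ c * φ 0}

/-- P is the i.i.d. Bernoulli(1/2) product measure on {−1,1}^ℤ ≃ ℤ → Bool -/
def IsBernoulli (P : Measure (ℤ → Bool)) : Prop :=
  IsProbabilityMeasure P ∧ ∀ (s : Finset ℤ) (f : ℤ → Bool),
    P {ω | ∀ i ∈ s, ω i = f i} = (1 / 2 : ENNReal) ^ s.card

/-- the shift θ^k -/
def shift (k : ℤ) (ω : ℤ → Bool) : ℤ → Bool := fun n => ω (k + n)

/-- first standard basis vector e₁ of ℤ^d -/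
def e1 (d : ℕ) : X d := fun i => if (i : ℕ) = 0 then 1 else 0

/-- the optimal path γ*: γ*_n = 0 if ω_n = 1, γ*_n = e₁ if ω_n = −1 -/
def gstar (d : ℕ) (ω : ℤ → Bool) : ℤ → X d := fun n => if ω n then 0 else e1 d

/-- the pair (m₁,m₂) is (λ,r)-good for ω -/
def Good (d : ℕ) (M₀ M₁ lam : ℝ) (r : ℕ) (m₁ m₂ : ℤ) (ω : ℤ → Bool) : Prop :=
  m₁ < m₂ ∧
  (∀ j : ℤ, m₁ + 1 ≤ j → j ≤ m₁ + r → ω j = true) ∧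
  (∀ k : ℕ, 1 ≤ k →
    (k : ℝ) * (M₁ + lam + Real.log (2 * (d : ℝ) + 1)) <
      ∑ j ∈ Finset.Icc (m₁ + r + 1) (m₁ + r + k), xi M₀ M₁ ω j) ∧
  (∀ j : ℤ, m₂ - r + 1 ≤ j → j ≤ m₂ → ω j = true) ∧
  (∀ k : ℕ, 1 ≤ k →
    (k : ℝ) * (M₁ + lam + Real.log (2 * (d : ℝ) + 1)) <
      ∑ j ∈ Finset.Icc (m₂ - r - k + 1) (m₂ - r), xi M₀ M₁ ω j)

/-- the ball B_r ⊆ ℤ^d as a finite set -/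
noncomputable def ball (d r : ℕ) : Finset (X d) := Fintype.piFinset fun _ => Finset.Icc (-(r : ℤ)) (r : ℤ)

lemma ball_nonempty (d r : ℕ) : (ball d r).Nonempty :=
  ⟨fun _ => 0, by simp [ball, Fintype.mem_piFinset]⟩

/-- the Hilbert projective (pseudo)metric ρ_r on functions restricted to B_r -/
noncomputable def rho (d r : ℕ) (φ ψ : X d → ℝ) : ℝ :=
  Real.log ((ball d r).sup' (ball_nonempty d r) (fun x => φ x / ψ x) *
            (ball d r).sup' (ball_nonempty d r) (fun x => ψ x / φ x))

/-- diam_r of a set of functions w.r.t. ρ_r -/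
noncomputable def diamr (d r : ℕ) (A : Set (X d → ℝ)) : ℝ :=
  sSup {y | ∃ φ ∈ A, ∃ ψ ∈ A, y = rho d r φ ψ}

/-- the set G(λ,r) (with K₁ explicit): φ ∈ F(2K₁) with sup_{|x|>r} φ ≤ sup_{|x|≤r} φ -/
def Gset (d : ℕ) (K₁ : ℝ) (r : ℕ) : Set (X d → ℝ) :=
  {φ | φ ∈ Fset d (2 * K₁) ∧ ∀ x, r < nm x → ∃ z, nm z ≤ r ∧ φ x ≤ φ z}

/-- the set H(λ,r) (with K₁, K₂ explicit) -/
def Hset (d : ℕ) (K₁ K₂ : ℝ) (r : ℕ) : Set (X d → ℝ) :=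
  {φ | φ ∈ Gset d K₁ r ∧ (⨆ x, φ x) = 1 ∧ ∀ y, nm y ≤ r → 1 / K₂ ≤ φ y}

/-- finite-volume Gibbs measure on [n₁,n₂] for ω (paths represented as
functions ℤ → ℤ^d frozen outside [n₁,n₂]) -/
def FVGibbs (d : ℕ) (V : X d → ℝ) (ω : ℤ → Bool) (n₁ n₂ : ℤ)
    (μ : Measure (ℤ → X d)) : Prop :=
  IsProbabilityMeasure μ ∧
  μ {γ | Adm n₁ n₂ γ ∧ Frozen n₁ n₂ γ} = 1 ∧
  ∀ γ : ℤ → X d, Adm n₁ n₂ γ →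
    μ {α | α n₁ = γ n₁ ∧ α n₂ = γ n₂} ≠ 0 →
    μ {α | ∀ n : ℤ, n₁ ≤ n → n ≤ n₂ → α n = γ n} =
      ENNReal.ofReal (Real.exp (Phi V ω n₁ n₂ γ) / Z V ω n₁ n₂ (γ n₁) (γ n₂)) *
        μ {α | α n₁ = γ n₁ ∧ α n₂ = γ n₂}

/-- (infinite-volume) Gibbs measure for ω -/
def GibbsMeasure (d : ℕ) (V : X d → ℝ) (ω : ℤ → Bool) (μ : Measure (ℤ → X d)) : Prop :=
  IsProbabilityMeasure μ ∧
  μ {α | ∀ n : ℤ, stepOK (α n) (α (n + 1))} = 1 ∧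
  ∀ n₁ n₂ : ℤ, n₁ < n₂ → ∀ γ : ℤ → X d, Adm n₁ n₂ γ →
    μ {α | α n₁ = γ n₁ ∧ α n₂ = γ n₂} ≠ 0 →
    μ {α | ∀ n : ℤ, n₁ ≤ n → n ≤ n₂ → α n = γ n} =
      ENNReal.ofReal (Real.exp (Phi V ω n₁ n₂ γ) / Z V ω n₁ n₂ (γ n₁) (γ n₂)) *
        μ {α | α n₁ = γ n₁ ∧ α n₂ = γ n₂}

/-- the weak localization condition for a measure on two-sided paths -/
def WeakLoc (d : ℕ) (μ : Measure (ℤ → X d)) : Prop :=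
  ∀ ε : ℝ, 0 < ε → ∃ r : ℕ,
    Filter.liminf (fun n : ℤ => μ {α | r < nm (α n)}) Filter.atTop < ENNReal.ofReal ε ∧
    Filter.liminf (fun n : ℤ => μ {α | r < nm (α n)}) Filter.atBot < ENNReal.ofReal ε

/-- normalized positive eigenfunction of the cocycle T -/
def IsEigen (d : ℕ) (V : X d → ℝ) (P : Measure (ℤ → Bool))
    (u : (ℤ → Bool) → X d → ℝ) : Prop :=
  (∀ x : X d, Measurable fun ω => u ω x) ∧
  ∀ᵐ ω ∂P, (∀ x, 0 < u ω x) ∧ BddAbove (Set.range (u ω)) ∧ (⨆ x, u ω x) = 1 ∧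
    ∃ κ : ℝ, 0 < κ ∧ ∀ x, T V ω 0 1 (u ω) x = κ * u (shift 1 ω) x

/-!
Write `T^{-n,0}(ω)φ(y)` as a sum over paths ending at `y` and sort the paths by the first time
`-t`, going backwards from `0`, at which they visit the origin. A path that never visits it
collects energy at most `n M₁`, and there are at most `(2d+1)^n` of them; on the other hand the
path from `0` to `0` that follows the pattern `γ*` of `ω` collects at least `Σ ξ - M₀`, which by
the hypothesis on `ω` beats `n (M₁ + λ + log (2d+1))`. This gives the term `c e^{-λn}`.
A path visiting `0` first at time `-t` (so `t ≥ |y|`) is compared with the path obtained by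
replacing its final segment by `γ*`: the energy gained is more than `t (λ + log (2d+1)) - M₀`, and
the replacement map is at most `(2d+1)^t`-to-one, so these paths contribute at most
`e^{M₀ - λt}` times the sum for `y = 0`. Summing over `t ≥ |y|` gives the term `e^{-λ|y|}`.
-/

section Steps

variable {d : ℕ}

lemma eq_zero_or_eq_single_of_sum_natAbs_le_one {ι : Type*} [Fintype ι] [DecidableEq ι]
    {v : ι → ℤ} (h : ∑ i, (v i).natAbs ≤ 1) :
    v = 0 ∨ ∃ i, v = Pi.single i (v i) ∧ (v i).natAbs = 1 := by
  by_cases hv : v = 0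
  · exact Or.inl hv
  obtain ⟨i, hi⟩ := Function.ne_iff.1 hv
  have hsplit := Finset.add_sum_erase Finset.univ (fun j => (v j).natAbs) (Finset.mem_univ i)
  have hi1 : (v i).natAbs = 1 := by
    have : (v i).natAbs ≠ 0 := by simpa using hi
    omega
  have hrest : ∀ j ∈ Finset.univ.erase i, v j = 0 := by
    have : ∑ j ∈ Finset.univ.erase i, (v j).natAbs = 0 := by omega
    simpa [Finset.sum_eq_zero_iff] using this
  refine Or.inr ⟨i, funext fun j => ?_, hi1⟩
  by_cases hj : j = i
  · subst hj
    simp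
  · rw [Pi.single_eq_of_ne hj, hrest j (by simp [hj])]

noncomputable def steps (d : ℕ) : Finset (X d) :=
  insert 0 (Finset.univ.image fun p : Fin d × Bool => Pi.single p.1 (if p.2 then 1 else -1))

lemma card_steps_le : (steps d).card ≤ 2 * d + 1 := by
  refine (Finset.card_insert_le _ _).trans ?_
  have := Finset.card_image_le (s := (Finset.univ : Finset (Fin d × Bool)))
    (f := fun p => (Pi.single p.1 (if p.2 then 1 else -1) : X d))
  simp only [Finset.card_univ, Fintype.card_prod, Fintype.card_fin, Fintype.card_bool] at this
  omega

lemma sub_mem_steps {x y : X d} (h : stepOK x y) : y - x ∈ steps d := by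
  rcases eq_zero_or_eq_single_of_sum_natAbs_le_one (v := y - x) h with h0 | ⟨i, hi, h1⟩
  · simp [steps, h0]
  refine Finset.mem_insert_of_mem (Finset.mem_image.2 ⟨(i, decide (0 < (y - x) i)), by simp, ?_⟩)
  rw [hi]
  congr 1
  rcases Int.natAbs_eq_iff.1 h1 with h | h <;> simp [h]

lemma card_fun_steps_le (t : ℕ) : Fintype.card (Fin t → steps d) ≤ (2 * d + 1) ^ t := by
  simpa using Nat.pow_le_pow_left card_steps_le t

lemma sum_natAbs_e1_le_one : ∑ i, (e1 d i).natAbs ≤ 1 := by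
  have : ∑ i, (e1 d i).natAbs = (Finset.univ.filter fun i : Fin d => (i : ℕ) = 0).card := by
    simp [e1, apply_ite Int.natAbs]
  rw [this, Finset.card_le_one]
  intro a ha b hb
  simp only [Finset.mem_filter] at ha hb
  exact Fin.ext (ha.2.trans hb.2.symm)

lemma stepOK_of_eq_zero_or_e1 {a b : X d} (ha : a = 0 ∨ a = e1 d) (hb : b = 0 ∨ b = e1 d) :
    stepOK a b := by
  rcases ha with rfl | rfl <;> rcases hb with rfl | rfl <;> simp [stepOK, sum_natAbs_e1_le_one]

lemma nm_zero : nm (0 : X d) = 0 :=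
  Nat.eq_zero_of_le_zero (Finset.sup_le fun i _ => by simp)

lemma nm_le_of_stepOK {x y : X d} (h : stepOK x y) : nm y ≤ nm x + 1 := by
  refine Finset.sup_le fun i _ => ?_
  have hi : (y i - x i).natAbs ≤ 1 :=
    (Finset.single_le_sum (f := fun i => (y i - x i).natAbs) (by simp) (Finset.mem_univ i)).trans h
  have hx : (x i).natAbs ≤ nm x := Finset.le_sup (f := fun i => (x i).natAbs) (Finset.mem_univ i)
  omega

end Steps

section Paths

variable {d : ℕ}

lemma eq_of_sub_eq_sub {α : Type*} [AddGroup α] {γ γ' : ℤ → α} {a b : ℤ} (hb : γ b = γ' b)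
    (h : ∀ m, a ≤ m → m < b → γ (m + 1) - γ m = γ' (m + 1) - γ' m) :
    ∀ m, a ≤ m → m ≤ b → γ m = γ' m := by
  intro m ham hmb
  induction m, hmb using Int.leInductionDown with
  | base => exact hb
  | pred k hkb ih =>
    have := h (k - 1) ham (by omega)
    rw [sub_add_cancel, ih (by omega)] at this
    simpa using this

lemma nm_le_of_adm {a b : ℤ} {γ : ℤ → X d} (hγ : Adm a b γ) {m : ℤ} (ha : a ≤ m) :
    ∀ k : ℕ, m + k ≤ b → nm (γ (m + k)) ≤ nm (γ m) + k := by
  intro k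
  induction k with
  | zero => simp
  | succ k ih =>
    intro hk
    have := nm_le_of_stepOK (hγ (m + k) (by omega) (by omega))
    push_cast
    rw [← add_assoc]
    have := ih (by omega)
    omega

abbrev AdmPath (n : ℕ) (y : X d) : Type :=
  {γ : ℤ → X d // Adm (-(n : ℤ)) 0 γ ∧ Frozen (-(n : ℤ)) 0 γ ∧ γ 0 = y}

variable {n t : ℕ} {y : X d}

lemma AdmPath.apply_of_nonneg (γ : AdmPath n y) {m : ℤ} (hm : 0 ≤ m) : γ.1 m = y :=
  (γ.2.2.1.2 m hm).trans γ.2.2.2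

def AdmPath.increments (htn : t ≤ n) (γ : AdmPath n y) : Fin t → steps d := fun j =>
  ⟨γ.1 (-j - 1 + 1) - γ.1 (-j - 1), sub_mem_steps (γ.2.1 _ (by omega) (by omega))⟩

lemma AdmPath.apply_eq_of_increments_eq (htn : t ≤ n) {γ γ' : AdmPath n y}
    (h : γ.increments htn = γ'.increments htn) {m : ℤ} (hm : -(t : ℤ) ≤ m) : γ.1 m = γ'.1 m := by
  rcases le_or_gt 0 m with h0 | h0
  · rw [γ.apply_of_nonneg h0, γ'.apply_of_nonneg h0]
  refine eq_of_sub_eq_sub (by rw [γ.2.2.2, γ'.2.2.2]) (fun k hk hk0 => ?_) m hm h0.le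
  obtain ⟨j, rfl⟩ : ∃ j : ℕ, k = -j - 1 := ⟨(-k - 1).toNat, by omega⟩
  exact congrArg Subtype.val (congrFun h ⟨j, by omega⟩)

lemma AdmPath.increments_injective :
    Function.Injective (AdmPath.increments (le_refl n) (y := y)) := by
  intro γ γ' h
  refine Subtype.ext (funext fun m => ?_)
  rcases le_or_gt (-(n : ℤ)) m with hm | hm
  · exact AdmPath.apply_eq_of_increments_eq le_rfl h hm
  · rw [γ.2.2.1.1 m hm.le, γ'.2.2.1.1 m hm.le, AdmPath.apply_eq_of_increments_eq le_rfl h le_rfl]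

instance : Finite (AdmPath n y) := Finite.of_injective _ AdmPath.increments_injective

noncomputable instance : Fintype (AdmPath n y) := Fintype.ofFinite _

lemma card_admPath_le : Fintype.card (AdmPath n y) ≤ (2 * d + 1) ^ n :=
  (Fintype.card_le_of_injective _ AdmPath.increments_injective).trans (card_fun_steps_le n)

lemma card_le_of_eqOn_Iic (htn : t ≤ n) (s : Finset (AdmPath n y))
    (hs : ∀ γ ∈ s, ∀ γ' ∈ s, ∀ m ≤ -(t : ℤ), γ.1 m = γ'.1 m) :
    s.card ≤ (2 * d + 1) ^ t := by
  refine (Finset.card_le_card_of_injOn (AdmPath.increments htn) (t := Finset.univ)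
    (fun _ _ => Finset.mem_univ _) fun γ hγ γ' hγ' h => ?_).trans (card_fun_steps_le t)
  refine Subtype.ext (funext fun m => ?_)
  rcases le_or_gt m (-(t : ℤ)) with hm | hm
  · exact hs γ hγ γ' hγ' m hm
  · exact AdmPath.apply_eq_of_increments_eq htn h hm.le

end Paths

section Energy

variable {d : ℕ} {M₀ M₁ : ℝ} {V : X d → ℝ} {ω : ℤ → Bool}

lemma Phi_congr {a b : ℤ} {γ γ' : ℤ → X d} (h : ∀ m, a < m → m ≤ b → γ m = γ' m) :
    Phi V ω a b γ = Phi V ω a b γ' :=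
  Finset.sum_congr rfl fun m hm => by
    rw [Finset.mem_Icc] at hm
    rw [h m (by omega) hm.2]

lemma Phi_add {a b c : ℤ} (hab : a ≤ b) (hbc : b ≤ c) (γ : ℤ → X d) :
    Phi V ω a c γ = Phi V ω a b γ + Phi V ω b c γ := by
  simp only [Phi, Finset.Icc_add_one_left_eq_Ioc]
  rw [← Finset.Ioc_union_Ioc_eq_Ioc hab hbc,
    Finset.sum_union (Finset.Ioc_disjoint_Ioc_of_le le_rfl)]

lemma Phi_le_of_ne_zero (hV : ∀ x : X d, x ≠ 0 → |V x| ≤ M₁) {t : ℕ} {γ : ℤ → X d}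
    (h : ∀ m, -(t : ℤ) < m → m ≤ 0 → γ m ≠ 0) : Phi V ω (-t) 0 γ ≤ t * M₁ := by
  have hsgn : ∀ m, |sgn (ω m)| = 1 := fun m => by unfold sgn; split_ifs <;> simp
  have hterm : ∀ m ∈ Finset.Icc (-(t : ℤ) + 1) 0, V (γ m) * sgn (ω m) ≤ M₁ := fun m hm => by
    rw [Finset.mem_Icc] at hm
    calc V (γ m) * sgn (ω m) ≤ |V (γ m) * sgn (ω m)| := le_abs_self _
      _ ≤ M₁ := by
        rw [abs_mul, hsgn, mul_one]
        exact hV _ (h m (by omega) hm.2)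
  calc Phi V ω (-t) 0 γ ≤ (Finset.Icc (-(t : ℤ) + 1) 0).card • M₁ :=
        Finset.sum_le_card_nsmul _ _ M₁ hterm
    _ = t * M₁ := by simp

lemma xi_le_V_gstar_mul_sgn (hd : 1 ≤ d) (hV0 : V 0 = M₀)
    (hV : ∀ x : X d, x ≠ 0 → |V x| ≤ M₁) (m : ℤ) :
    xi M₀ M₁ ω m ≤ V (gstar d ω m) * sgn (ω m) := by
  have he1 : e1 d ≠ 0 := fun h => by simpa [e1] using congrFun h ⟨0, hd⟩
  by_cases hω : ω m
  · simp [xi, gstar, sgn, hω, hV0]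
  · simp only [xi, gstar, sgn, hω, Bool.false_eq_true, if_false, mul_neg_one]
    linarith [(abs_le.1 (hV _ he1)).2]

lemma xi_sub_le_V_zero_mul_sgn (hM₀ : 0 ≤ M₀) (hM₁ : 0 ≤ M₁) (hV0 : V 0 = M₀) (m : ℤ) :
    xi M₀ M₁ ω m - M₀ ≤ V 0 * sgn (ω m) := by
  unfold xi sgn
  split_ifs <;> linarith

end Energy

section Splice

variable {d : ℕ} {n t : ℕ} {ω : ℤ → Bool} {γ : ℤ → X d}

def splice (t : ℕ) (ω : ℤ → Bool) (γ : ℤ → X d) : ℤ → X d :=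
  fun m => if m ≤ -(t : ℤ) then γ m else if m < 0 then gstar d ω m else 0

lemma splice_of_le {m : ℤ} (hm : m ≤ -(t : ℤ)) : splice t ω γ m = γ m := if_pos hm

lemma splice_of_lt_of_neg {m : ℤ} (h₁ : -(t : ℤ) < m) (h₂ : m < 0) :
    splice t ω γ m = gstar d ω m := by
  simp [splice, not_le.2 h₁, h₂]

lemma splice_of_nonneg (h : γ (-(t : ℤ)) = 0) {m : ℤ} (hm : 0 ≤ m) : splice t ω γ m = 0 := by
  unfold splice
  split_ifs with h₁
  · rwa [show m = -(t : ℤ) by omega]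
  · omega
  · rfl

lemma splice_eq_zero_or_e1 (h : γ (-(t : ℤ)) = 0) {m : ℤ} (hm : -(t : ℤ) ≤ m) :
    splice t ω γ m = 0 ∨ splice t ω γ m = e1 d := by
  rcases lt_or_ge m 0 with h₀ | h₀
  · rcases hm.eq_or_lt with rfl | hm
    · exact Or.inl ((splice_of_le le_rfl).trans h)
    · rw [splice_of_lt_of_neg hm h₀]
      unfold gstar
      split_ifs <;> simp
  · exact Or.inl (splice_of_nonneg h h₀)

lemma adm_splice (hγ : Adm (-(n : ℤ)) 0 γ) (h : γ (-(t : ℤ)) = 0) :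
    Adm (-(n : ℤ)) 0 (splice t ω γ) := by
  intro m hm₁ hm₂
  rcases le_or_gt (m + 1) (-(t : ℤ)) with hmt | hmt
  · rw [splice_of_le hmt, splice_of_le (by omega)]
    exact hγ m hm₁ hm₂
  · exact stepOK_of_eq_zero_or_e1 (splice_eq_zero_or_e1 h (by omega))
      (splice_eq_zero_or_e1 h (by omega))

lemma frozen_splice (htn : t ≤ n) (hγ : Frozen (-(n : ℤ)) 0 γ) (h : γ (-(t : ℤ)) = 0) :
    Frozen (-(n : ℤ)) 0 (splice t ω γ) :=
  ⟨fun m hm => by rw [splice_of_le (by omega), splice_of_le (by omega), hγ.1 m hm],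
   fun m hm => by rw [splice_of_nonneg h hm, splice_of_nonneg h le_rfl]⟩

def AdmPath.splice {y : X d} (γ : AdmPath n y) (htn : t ≤ n) (ω : ℤ → Bool)
    (h : γ.1 (-(t : ℤ)) = 0) : AdmPath n (0 : X d) :=
  ⟨BKpaper.splice t ω γ.1, adm_splice γ.2.1 h, frozen_splice htn γ.2.2.1 h,
    splice_of_nonneg h le_rfl⟩

def AdmPath.zero : AdmPath n (0 : X d) :=
  ⟨0, fun _ _ _ => by simp [stepOK], ⟨fun _ _ => rfl, fun _ _ => rfl⟩, rfl⟩

lemma sum_xi_sub_le_Phi_splice {M₀ M₁ : ℝ} {V : X d → ℝ} (hd : 1 ≤ d) (hM₀ : 0 ≤ M₀)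
    (hM₁ : 0 ≤ M₁) (hV0 : V 0 = M₀) (hV : ∀ x : X d, x ≠ 0 → |V x| ≤ M₁) (ht : 1 ≤ t)
    (h : γ (-(t : ℤ)) = 0) :
    ∑ m ∈ Finset.Icc (-(t : ℤ) + 1) 0, xi M₀ M₁ ω m - M₀ ≤ Phi V ω (-t) 0 (splice t ω γ) := by
  have hterm : ∀ m ∈ Finset.Icc (-(t : ℤ) + 1) 0,
      xi M₀ M₁ ω m - (if m = 0 then M₀ else 0) ≤ V (splice t ω γ m) * sgn (ω m) := by
    intro m hm
    rw [Finset.mem_Icc] at hm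
    split_ifs with hm₀
    · rw [hm₀, splice_of_nonneg h le_rfl]
      exact xi_sub_le_V_zero_mul_sgn hM₀ hM₁ hV0 0
    · rw [sub_zero, splice_of_lt_of_neg (by omega) (by omega)]
      exact xi_le_V_gstar_mul_sgn hd hV0 hV m
  have := Finset.sum_le_sum hterm
  rwa [Finset.sum_sub_distrib, Finset.sum_ite_eq', if_pos (by simp; omega)] at this

end Splice

section HitTime

variable {d : ℕ} {n : ℕ} {γ : ℤ → X d}

open Classical in
/-- The first `t ≤ n` with `γ (-t) = 0`, and `0` if there is none; for `γ 0 ≠ 0` the value `0`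
thus means that `γ` avoids `0` on `[-n, 0]`. -/
noncomputable def hitTime (n : ℕ) (γ : ℤ → X d) : ℕ :=
  if h : ∃ t, t ≤ n ∧ γ (-(t : ℤ)) = 0 then Nat.find h else 0

lemma hitTime_le : hitTime n γ ≤ n := by
  unfold hitTime
  split_ifs with h
  · exact (Nat.find_spec h).1
  · exact Nat.zero_le n

lemma apply_neg_hitTime (h : hitTime n γ ≠ 0) : γ (-(hitTime n γ : ℤ)) = 0 := by
  unfold hitTime at *
  split_ifs at * with hex
  · exact (Nat.find_spec hex).2
  · exact absurd rfl h

lemma apply_ne_zero_of_lt_hitTime : ∀ m, -(hitTime n γ : ℤ) < m → m ≤ 0 → γ m ≠ 0 := by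
  intro m hm₁ hm₂
  obtain ⟨s, rfl⟩ : ∃ s : ℕ, m = -(s : ℤ) := ⟨(-m).toNat, by omega⟩
  have hs : s < hitTime n γ := by omega
  unfold hitTime at hs
  split_ifs at hs with hex
  · exact fun h0 => Nat.find_min hex hs ⟨(hs.trans_le (Nat.find_spec hex).1).le, h0⟩
  · omega

lemma apply_ne_zero_of_hitTime_eq_zero (h₀ : γ 0 ≠ 0) (h : hitTime n γ = 0) :
    ∀ m, -(n : ℤ) < m → m ≤ 0 → γ m ≠ 0 := by
  intro m hm₁ hm₂
  obtain ⟨s, rfl⟩ : ∃ s : ℕ, m = -(s : ℤ) := ⟨(-m).toNat, by omega⟩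
  unfold hitTime at h
  split_ifs at h with hex
  · exact absurd (by simpa [h] using (Nat.find_spec hex).2) h₀
  · exact fun h0 => hex ⟨s, by omega, h0⟩

end HitTime

section PathSum

variable {d : ℕ} {M₀ M₁ lam : ℝ} {V : X d → ℝ} {ω : ℤ → Bool} {φ : X d → ℝ} {c : ℝ}
  {n t : ℕ} {y : X d}

lemma sum_comp_le_mul_sum {α β : Type*} [Fintype β] [DecidableEq β] (s : Finset α) (π : α → β)
    {g : β → ℝ} (hg : ∀ b, 0 ≤ g b) {K : ℕ} (hK : ∀ b, (s.filter (π · = b)).card ≤ K) :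
    ∑ a ∈ s, g (π a) ≤ K * ∑ b, g b := by
  rw [← Finset.sum_fiberwise s π, Finset.mul_sum]
  refine Finset.sum_le_sum fun b _ => ?_
  rw [Finset.sum_congr rfl fun a ha => by rw [(Finset.mem_filter.1 ha).2], Finset.sum_const,
    nsmul_eq_mul]
  exact mul_le_mul_of_nonneg_right (by exact_mod_cast hK b) (hg b)

lemma AdmPath.nm_le_of_apply_eq_zero (γ : AdmPath n y) (htn : t ≤ n) (h : γ.1 (-(t : ℤ)) = 0) :
    nm y ≤ t := by
  have := nm_le_of_adm γ.2.1 (m := -(t : ℤ)) (by omega) t (by omega)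
  rwa [h, nm_zero, zero_add, neg_add_cancel, γ.2.2.2] at this

lemma pow_mul_exp_le_exp_mul_exp {S : ℝ} (hS : t * (M₁ + lam + Real.log (2 * d + 1)) < S) :
    (2 * (d : ℝ) + 1) ^ t * Real.exp (t * M₁) ≤ Real.exp (-lam * t) * Real.exp S := by
  rw [← Real.exp_log (by positivity : (0 : ℝ) < 2 * d + 1), ← Real.exp_nat_mul, ← Real.exp_add,
    ← Real.exp_add]
  exact Real.exp_le_exp.2 (by linarith)

lemma Phi_le_Phi_splice (hd : 1 ≤ d) (hM₀ : 0 ≤ M₀) (hM₁ : 0 ≤ M₁) (hV0 : V 0 = M₀)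
    (hV : ∀ x : X d, x ≠ 0 → |V x| ≤ M₁) (ht : 1 ≤ t) (htn : t ≤ n) {γ : ℤ → X d}
    (h : γ (-(t : ℤ)) = 0) (hne : ∀ m, -(t : ℤ) < m → m ≤ 0 → γ m ≠ 0) :
    Phi V ω (-n) 0 γ ≤ Phi V ω (-n) 0 (splice t ω γ) +
      (M₀ + t * M₁ - ∑ m ∈ Finset.Icc (-(t : ℤ) + 1) 0, xi M₀ M₁ ω m) := by
  have hn : -(n : ℤ) ≤ -t := by omega
  rw [Phi_add hn (by omega) γ, Phi_add hn (by omega) (splice t ω γ),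
    Phi_congr (γ' := γ) fun m _ hm => splice_of_le hm]
  linarith [Phi_le_of_ne_zero (ω := ω) hV hne,
    sum_xi_sub_le_Phi_splice (ω := ω) hd hM₀ hM₁ hV0 hV ht h]

noncomputable def pathWeight (V : X d → ℝ) (ω : ℤ → Bool) (n : ℕ) (φ : X d → ℝ)
    (γ : ℤ → X d) : ℝ :=
  Real.exp (Phi V ω (-n) 0 γ) * φ (γ (-n))

noncomputable def pathSum (V : X d → ℝ) (ω : ℤ → Bool) (n : ℕ) (φ : X d → ℝ) (y : X d) : ℝ :=
  ∑ γ : AdmPath n y, pathWeight V ω n φ γ.1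

lemma pathWeight_nonneg (hφ : ∀ x, 0 ≤ φ x) (γ : ℤ → X d) : 0 ≤ pathWeight V ω n φ γ :=
  mul_nonneg (Real.exp_pos _).le (hφ _)

lemma T_eq_pathSum : T V ω (-n) 0 φ y = ((2 * (d : ℝ) + 1) ^ n)⁻¹ * pathSum V ω n φ y := by
  rw [T, tsum_fintype, zero_sub, neg_neg, zpow_natCast]
  rfl

lemma pathSum_nonneg (hφ : ∀ x, 0 ≤ φ x) : 0 ≤ pathSum V ω n φ y :=
  Finset.sum_nonneg fun _ _ => pathWeight_nonneg hφ _

lemma exp_sum_xi_mul_le_pathSum (hd : 1 ≤ d) (hM₀ : 0 ≤ M₀) (hM₁ : 0 ≤ M₁) (hV0 : V 0 = M₀)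
    (hV : ∀ x : X d, x ≠ 0 → |V x| ≤ M₁) (hφ : ∀ x, 0 ≤ φ x) (hn : 1 ≤ n) :
    Real.exp (∑ m ∈ Finset.Icc (-(n : ℤ) + 1) 0, xi M₀ M₁ ω m - M₀) * φ 0 ≤
      pathSum V ω n φ 0 := by
  let γ : AdmPath n (0 : X d) := AdmPath.zero.splice le_rfl ω rfl
  have hend : γ.1 (-n) = 0 := splice_of_le le_rfl
  calc _ ≤ pathWeight V ω n φ γ.1 := by
        rw [pathWeight, hend]
        gcongr
        · exact hφ 0
        · exact sum_xi_sub_le_Phi_splice hd hM₀ hM₁ hV0 hV hn rfl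
    _ ≤ pathSum V ω n φ 0 :=
        Finset.single_le_sum (f := fun γ : AdmPath n (0 : X d) => pathWeight V ω n φ γ.1)
          (fun _ _ => pathWeight_nonneg hφ _) (Finset.mem_univ γ)

lemma sum_hitTime_eq_zero_le (hV : ∀ x : X d, x ≠ 0 → |V x| ≤ M₁) (hφ : φ ∈ Fset d c)
    (hy : y ≠ 0) :
    ∑ γ : AdmPath n y with hitTime n γ.1 = 0, pathWeight V ω n φ γ.1 ≤
      (2 * d + 1) ^ n * Real.exp (n * M₁) * (c * φ 0) := by
  have hterm : ∀ γ ∈ Finset.univ.filter fun γ : AdmPath n y => hitTime n γ.1 = 0,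
      pathWeight V ω n φ γ.1 ≤ Real.exp (n * M₁) * (c * φ 0) := by
    intro γ hγ
    have hne := apply_ne_zero_of_hitTime_eq_zero (γ.2.2.2.symm ▸ hy) (Finset.mem_filter.1 hγ).2
    exact mul_le_mul (Real.exp_le_exp.2 (Phi_le_of_ne_zero hV hne))
      (hφ.2 _) (hφ.1 _) (Real.exp_pos _).le
  have hcard : ((Finset.univ.filter fun γ : AdmPath n y => hitTime n γ.1 = 0).card : ℝ) ≤
      (2 * d + 1) ^ n := by
    exact_mod_cast (Finset.card_filter_le _ _).trans card_admPath_le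
  calc _ ≤ _ := Finset.sum_le_card_nsmul _ _ _ hterm
    _ ≤ _ := by
      rw [nsmul_eq_mul, mul_assoc]
      exact mul_le_mul_of_nonneg_right hcard
        (mul_nonneg (Real.exp_pos _).le ((hφ.1 0).trans (hφ.2 0)))

lemma sum_hitTime_eq_le (hd : 1 ≤ d) (hM₀ : 0 ≤ M₀) (hM₁ : 0 ≤ M₁) (hV0 : V 0 = M₀)
    (hV : ∀ x : X d, x ≠ 0 → |V x| ≤ M₁) (hφ : ∀ x, 0 ≤ φ x) (ht : 1 ≤ t) (htn : t ≤ n) :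
    ∑ γ : AdmPath n y with hitTime n γ.1 = t, pathWeight V ω n φ γ.1 ≤
      Real.exp (M₀ + t * M₁ - ∑ m ∈ Finset.Icc (-(t : ℤ) + 1) 0, xi M₀ M₁ ω m) *
        ((2 * d + 1) ^ t * pathSum V ω n φ 0) := by
  classical
  set s := Finset.univ.filter fun γ : AdmPath n y => hitTime n γ.1 = t
  have hzero : ∀ γ ∈ s, γ.1 (-(t : ℤ)) = 0 := fun γ hγ => by
    have h := (Finset.mem_filter.1 hγ).2
    simpa [h] using apply_neg_hitTime (n := n) (γ := γ.1) (by omega)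
  -- the value of `π` off `s` is irrelevant
  let π : AdmPath n y → AdmPath n (0 : X d) := fun γ =>
    if h : γ.1 (-(t : ℤ)) = 0 then γ.splice htn ω h else AdmPath.zero
  have hπ : ∀ γ ∈ s, (π γ).1 = splice t ω γ.1 := fun γ hγ => by
    simp only [π, dif_pos (hzero γ hγ), AdmPath.splice]
  have hterm : ∀ γ ∈ s, pathWeight V ω n φ γ.1 ≤
      Real.exp (M₀ + t * M₁ - ∑ m ∈ Finset.Icc (-(t : ℤ) + 1) 0, xi M₀ M₁ ω m) *
        pathWeight V ω n φ (π γ).1 := fun γ hγ => by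
    have hne := apply_ne_zero_of_lt_hitTime (n := n) (γ := γ.1)
    rw [(Finset.mem_filter.1 hγ).2] at hne
    have hΦ := Phi_le_Phi_splice (ω := ω) hd hM₀ hM₁ hV0 hV ht htn (hzero γ hγ) hne
    rw [pathWeight, pathWeight, hπ γ hγ, splice_of_le (by omega), ← mul_assoc, ← Real.exp_add]
    gcongr
    · exact hφ _
    · linarith
  have hfiber : ∀ b, (s.filter (π · = b)).card ≤ (2 * d + 1) ^ t := fun b =>
    card_le_of_eqOn_Iic htn _ fun γ hγ γ' hγ' m hm => by
      simp only [Finset.mem_filter] at hγ hγ'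
      calc γ.1 m = (π γ).1 m := by rw [hπ γ hγ.1, splice_of_le hm]
        _ = (π γ').1 m := by rw [hγ.2, hγ'.2]
        _ = γ'.1 m := by rw [hπ γ' hγ'.1, splice_of_le hm]
  calc _ ≤ ∑ γ ∈ s, Real.exp (M₀ + t * M₁ - ∑ m ∈ Finset.Icc (-(t : ℤ) + 1) 0, xi M₀ M₁ ω m) *
        pathWeight V ω n φ (π γ).1 := Finset.sum_le_sum hterm
    _ ≤ _ := by
      rw [← Finset.mul_sum]
      gcongr
      exact_mod_cast sum_comp_le_mul_sum s π (fun b => pathWeight_nonneg hφ b.1) hfiber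

lemma sum_Ico_exp_neg_mul_le (hlam : 0 < lam) (r m : ℕ) :
    ∑ t ∈ Finset.Ico r m, Real.exp (-lam * t) ≤ Real.exp (-lam * r) / (1 - Real.exp (-lam)) := by
  have hpow : ∀ t : ℕ, Real.exp (-lam * t) = Real.exp (-lam) ^ t := fun t => by
    rw [← Real.exp_nat_mul, mul_comm]
  simp_rw [hpow]
  exact geom_sum_Ico_le_of_lt_one (Real.exp_pos _).le (Real.exp_lt_one_iff.2 (by linarith))

lemma sum_hitTime_eq_zero_le_pathSum (hd : 1 ≤ d) (hM₀ : 0 ≤ M₀) (hM₁ : 0 ≤ M₁)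
    (hV0 : V 0 = M₀) (hV : ∀ x : X d, x ≠ 0 → |V x| ≤ M₁) (hc : 0 ≤ c) (hφ : φ ∈ Fset d c)
    (hy : y ≠ 0) (hn : 1 ≤ n)
    (hS : n * (M₁ + lam + Real.log (2 * d + 1)) < ∑ m ∈ Finset.Icc (-(n : ℤ) + 1) 0, xi M₀ M₁ ω m) :
    ∑ γ : AdmPath n y with hitTime n γ.1 = 0, pathWeight V ω n φ γ.1 ≤
      c * Real.exp (-lam * n) * (Real.exp M₀ * pathSum V ω n φ 0) := by
  set S := ∑ m ∈ Finset.Icc (-(n : ℤ) + 1) 0, xi M₀ M₁ ω m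
  calc _ ≤ (2 * d + 1) ^ n * Real.exp (n * M₁) * (c * φ 0) := sum_hitTime_eq_zero_le hV hφ hy
    _ ≤ Real.exp (-lam * n) * Real.exp S * (c * φ 0) :=
      mul_le_mul_of_nonneg_right (pow_mul_exp_le_exp_mul_exp hS) (mul_nonneg hc (hφ.1 0))
    _ = c * Real.exp (-lam * n) * (Real.exp M₀ * (Real.exp (S - M₀) * φ 0)) := by
      rw [Real.exp_sub]
      field_simp
    _ ≤ _ := by
      gcongr
      exact exp_sum_xi_mul_le_pathSum hd hM₀ hM₁ hV0 hV hφ.1 hn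

lemma sum_hitTime_eq_le_pathSum (hd : 1 ≤ d) (hM₀ : 0 ≤ M₀) (hM₁ : 0 ≤ M₁) (hV0 : V 0 = M₀)
    (hV : ∀ x : X d, x ≠ 0 → |V x| ≤ M₁) (hφ : ∀ x, 0 ≤ φ x) (ht : 1 ≤ t) (htn : t ≤ n)
    (hS : t * (M₁ + lam + Real.log (2 * d + 1)) < ∑ m ∈ Finset.Icc (-(t : ℤ) + 1) 0, xi M₀ M₁ ω m) :
    ∑ γ : AdmPath n y with hitTime n γ.1 = t, pathWeight V ω n φ γ.1 ≤
      Real.exp M₀ * Real.exp (-lam * t) * pathSum V ω n φ 0 := by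
  set S := ∑ m ∈ Finset.Icc (-(t : ℤ) + 1) 0, xi M₀ M₁ ω m
  set W := pathSum V ω n φ 0
  calc _ ≤ Real.exp (M₀ + t * M₁ - S) * ((2 * d + 1) ^ t * W) :=
        sum_hitTime_eq_le hd hM₀ hM₁ hV0 hV hφ ht htn
    _ = Real.exp (M₀ - S) * ((2 * d + 1) ^ t * Real.exp (t * M₁)) * W := by
      rw [add_sub_right_comm, Real.exp_add]
      ring
    _ ≤ Real.exp (M₀ - S) * (Real.exp (-lam * t) * Real.exp S) * W := by
      gcongr Real.exp (M₀ - S) * ?_ * W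
      · exact pathSum_nonneg hφ
      · exact pow_mul_exp_le_exp_mul_exp hS
    _ = _ := by
      rw [Real.exp_sub]
      field_simp

lemma pathSum_le (hd : 1 ≤ d) (hM₀ : 0 ≤ M₀) (hM₁ : 0 ≤ M₁) (hV0 : V 0 = M₀)
    (hV : ∀ x : X d, x ≠ 0 → |V x| ≤ M₁) (hlam : 0 < lam) {N : ℕ}
    (hω : ∀ k : ℕ, N ≤ k → (k : ℝ) * (M₁ + lam + Real.log (2 * (d : ℝ) + 1)) <
      ∑ m ∈ Finset.Icc (-(k : ℤ) + 1) 0, xi M₀ M₁ ω m)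
    (hc : 0 ≤ c) (hφ : φ ∈ Fset d c) (hy : N ≤ nm y) (hn : N ≤ n) :
    pathSum V ω n φ y ≤ Real.exp M₀ / (1 - Real.exp (-lam)) *
      (Real.exp (-lam * nm y) + c * Real.exp (-lam * n)) * pathSum V ω n φ 0 := by
  classical
  have hN : 1 ≤ N := by
    by_contra h0
    simpa using hω 0 (by omega)
  have hy0 : y ≠ 0 := by
    rintro rfl
    rw [nm_zero] at hy
    omega
  set W := pathSum V ω n φ 0
  have hW : 0 ≤ W := pathSum_nonneg hφ.1
  have hx : 0 < 1 - Real.exp (-lam) := sub_pos.2 (Real.exp_lt_one_iff.2 (by linarith))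
  have hmaps : ∀ γ ∈ (Finset.univ : Finset (AdmPath n y)),
      hitTime n γ.1 ∈ insert 0 (Finset.Ico (nm y) (n + 1)) := fun γ _ => by
    rcases eq_or_ne (hitTime n γ.1) 0 with h | h
    · simp [h]
    · have hyt := γ.nm_le_of_apply_eq_zero hitTime_le (apply_neg_hitTime h)
      have htn := hitTime_le (n := n) (γ := γ.1)
      exact Finset.mem_insert_of_mem (Finset.mem_Ico.2 ⟨by omega, by omega⟩)
  have hB : ∀ t ∈ Finset.Ico (nm y) (n + 1),
      ∑ γ : AdmPath n y with hitTime n γ.1 = t, pathWeight V ω n φ γ.1 ≤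
        Real.exp M₀ * Real.exp (-lam * t) * W := fun t ht => by
    rw [Finset.mem_Ico] at ht
    exact sum_hitTime_eq_le_pathSum hd hM₀ hM₁ hV0 hV hφ.1 (by omega) (by omega)
      (hω t (by omega))
  calc pathSum V ω n φ y
      = ∑ t ∈ insert 0 (Finset.Ico (nm y) (n + 1)),
          ∑ γ : AdmPath n y with hitTime n γ.1 = t, pathWeight V ω n φ γ.1 :=
        (Finset.sum_fiberwise_of_maps_to hmaps _).symm
    _ = _ := Finset.sum_insert (by simp; omega)
    _ ≤ c * Real.exp (-lam * n) * (Real.exp M₀ * W) +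
          ∑ t ∈ Finset.Ico (nm y) (n + 1), Real.exp M₀ * Real.exp (-lam * t) * W :=
        add_le_add (sum_hitTime_eq_zero_le_pathSum hd hM₀ hM₁ hV0 hV hc hφ hy0 (by omega)
          (hω n hn)) (Finset.sum_le_sum hB)
    _ = c * Real.exp (-lam * n) * (Real.exp M₀ * W) +
          Real.exp M₀ * (∑ t ∈ Finset.Ico (nm y) (n + 1), Real.exp (-lam * t)) * W := by
        rw [Finset.mul_sum, Finset.sum_mul]
    _ ≤ c * Real.exp (-lam * n) * (Real.exp M₀ * W) / (1 - Real.exp (-lam)) +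
          Real.exp M₀ * (Real.exp (-lam * nm y) / (1 - Real.exp (-lam))) * W := by
      gcongr
      · exact le_div_self (by positivity) hx (by linarith [Real.exp_pos (-lam)])
      · exact sum_Ico_exp_neg_mul_le hlam _ _
    _ = _ := by ring

end PathSum

theorem statement1_general
    (d : ℕ) (hd : 1 ≤ d) (M₀ M₁ : ℝ) (hM₀ : 0 ≤ M₀) (hM₁ : 0 ≤ M₁)
    (lam : ℝ) (hlam : 0 < lam) :
    ∃ K₁ : ℝ, 1 ≤ K₁ ∧
      ∀ (V : X d → ℝ), V 0 = M₀ → (∀ x : X d, x ≠ 0 → |V x| ≤ M₁) →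
      ∀ (ω : ℤ → Bool) (N : ℕ),
        (∀ k : ℕ, N ≤ k →
          (k : ℝ) * (M₁ + lam + Real.log (2 * (d : ℝ) + 1)) <
            ∑ m ∈ Finset.Icc (-(k : ℤ) + 1) 0, xi M₀ M₁ ω m) →
        ∀ c : ℝ, 1 ≤ c → ∀ φ ∈ Fset d c, ∀ y : X d, N ≤ nm y → ∀ n : ℕ, N ≤ n →
          T V ω (-(n : ℤ)) 0 φ y ≤
            K₁ * (Real.exp (-lam * nm y) + c * Real.exp (-lam * n)) *
              T V ω (-(n : ℤ)) 0 φ 0 := by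
  have hx : 0 < 1 - Real.exp (-lam) := sub_pos.2 (Real.exp_lt_one_iff.2 (by linarith))
  refine ⟨Real.exp M₀ / (1 - Real.exp (-lam)), ?_, ?_⟩
  · rw [one_le_div hx]
    linarith [Real.one_le_exp hM₀, Real.exp_pos (-lam)]
  intro V hV0 hV ω N hω c hc φ hφ y hy n hn
  rw [T_eq_pathSum, T_eq_pathSum, mul_left_comm _ ((2 * (d : ℝ) + 1) ^ n)⁻¹]
  exact mul_le_mul_of_nonneg_left (pathSum_le hd hM₀ hM₁ hV0 hV hlam hω (by linarith) hφ hy hn)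
    (by positivity)

/-- Lemma 3.1 (localization for the operator T). -/
theorem statement1
    (d : ℕ) (hd : 1 ≤ d) (M₀ M₁ : ℝ) (hM₀ : 0 ≤ M₀) (hM₁ : 0 ≤ M₁)
    (hl0 : 0 < (M₀ - 3 * M₁) / 2 - Real.log (2 * (d : ℝ) + 1))
    (lam : ℝ) (hlam : 0 < lam)
    (hlam' : lam < (M₀ - 3 * M₁) / 2 - Real.log (2 * (d : ℝ) + 1)) :
    ∃ K₁ : ℝ, 1 ≤ K₁ ∧
      ∀ (V : X d → ℝ), V 0 = M₀ → (∀ x : X d, x ≠ 0 → |V x| ≤ M₁) →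
      ∀ (ω : ℤ → Bool) (N : ℕ),
        (∀ k : ℕ, N ≤ k →
          (k : ℝ) * (M₁ + lam + Real.log (2 * (d : ℝ) + 1)) <
            ∑ m ∈ Finset.Icc (-(k : ℤ) + 1) 0, xi M₀ M₁ ω m) →
        ∀ c : ℝ, 1 ≤ c → ∀ φ ∈ Fset d c, ∀ y : X d, N ≤ nm y → ∀ n : ℕ, N ≤ n →
          T V ω (-(n : ℤ)) 0 φ y ≤
            K₁ * (Real.exp (-lam * nm y) + c * Real.exp (-lam * n)) *
              T V ω (-(n : ℤ)) 0 φ 0 :=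
  statement1_general d hd M₀ M₁ hM₀ hM₁ lam hlam

end BKpaper
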